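/- Theorem 1 (the learned predicate π° has no false positives): let L be a solution of a Witness triangle puzzle instance on the m×n grid and let W be any prefix of L. Then (a) for every constrained square s, cnt(W,s) ≤ k(s); and (b) for every constrained square s with k(s) = 3 such that the last vertex of W is not a corner of s, cnt(W,s) ∉ {1, 2}. Consequently π°, which returns True on a partial path exactly when (a) or (b) is violated for some constrained square, never returns True on a prefix of a solution. -/

import Mathlib

open SimpleGraph

/-- The grid graph on `(m+1) × (n+1)` vertices: two vertices are adjacent iff
the sum of the absolute differences of their coordinates (in `ℤ`) equals `1`. -/
def gridGraph (m n : ℕ) : SimpleGraph (Fin (m+1) × Fin (n+1)) where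
  Adj u v := |(u.1 : ℤ) - (v.1 : ℤ)| + |(u.2 : ℤ) - (v.2 : ℤ)| = 1
  symm := by
    constructor
    intro u v h
    rw [abs_sub_comm ((u.1 : ℤ)), abs_sub_comm ((u.2 : ℤ))] at h
    exact h
  loopless := by constructor; intro u h; simp at h

/-- The four corners of the square `s(i,j)`. -/
def squareCorners {m n : ℕ} (i : Fin m) (j : Fin n) :
    Finset (Fin (m+1) × Fin (n+1)) :=
  {(i.castSucc, j.castSucc), (i.succ, j.castSucc),
   (i.castSucc, j.succ), (i.succ, j.succ)}

/-- The four boundary edges of the square `s(i,j)`. -/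
def squareEdges {m n : ℕ} (i : Fin m) (j : Fin n) :
    Finset (Sym2 (Fin (m+1) × Fin (n+1))) :=
  { s((i.castSucc, j.castSucc), (i.succ, j.castSucc)),
    s((i.castSucc, j.succ), (i.succ, j.succ)),
    s((i.castSucc, j.castSucc), (i.castSucc, j.succ)),
    s((i.succ, j.castSucc), (i.succ, j.succ)) }

/-- The number of edges of the walk `W` lying on the boundary of square `s(i,j)`. -/
def cnt {m n : ℕ} {u v : Fin (m+1) × Fin (n+1)}
    (W : (gridGraph m n).Walk u v) (i : Fin m) (j : Fin n) : ℕ :=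
  (W.edges.filter (fun e => e ∈ squareEdges i j)).length

/-!
Write `L = W.append X`. Edge counts add along `L`, which gives (a). For (b), suppose `W` has one
or two of the three edges that `L` has on the boundary of `s`; then `X` has the others. Three
edges of a 4-cycle form a path of length three, so one of the `W`-edges meets one of the
`X`-edges in a corner of `s`. That corner lies on both `W` and `X`, and since `L` is a path
it must be their junction `v`.
-/

theorem List.exists_mem_ne_ne_of_nodup {α : Type*} [DecidableEq α] {l : List α} (hl : l.Nodup)
    (hlen : 2 < l.length) (a b : α) : ∃ c ∈ l, c ≠ a ∧ c ≠ b := by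
  by_contra! H
  have hsub : l.toFinset ⊆ {a, b} := fun c hc => by
    simpa [or_iff_not_imp_left] using H c (List.mem_toFinset.mp hc)
  have := (Finset.card_le_card hsub).trans Finset.card_le_two
  rw [List.toFinset_card_of_nodup hl] at this
  omega

theorem SimpleGraph.Walk.IsPath.eq_of_mem_edges_append {V : Type*} {G : SimpleGraph V}
    {u v w x : V} {W : G.Walk u v} {X : G.Walk v w} (h : (W.append X).IsPath)
    {e f : Sym2 V} (he : e ∈ W.edges) (hf : f ∈ X.edges) (hxe : x ∈ e) (hxf : x ∈ f) :
    x = v := by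
  by_contra hxv
  exact h.ne_of_mem_support_of_append hxv (Walk.mem_support_of_mem_edges he hxe)
    (Walk.mem_support_of_mem_edges hf hxf) rfl

section QuadEdges

variable {V : Type*} [DecidableEq V] {a b c d : V}

/-- The 4-cycle `a - b - d - c - a`; `squareEdges i j` is this set for the corners of `s(i,j)`
listed in the order of `squareCorners i j`. -/
def quadEdges (a b c d : V) : Finset (Sym2 V) :=
  {s(a, b), s(c, d), s(a, c), s(b, d)}

theorem mem_of_mem_of_mem_quadEdges {e : Sym2 V} {x : V} (he : e ∈ quadEdges a b c d)
    (hx : x ∈ e) : x ∈ ({a, b, c, d} : Finset V) := by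
  simp only [quadEdges, Finset.mem_insert, Finset.mem_singleton] at he
  rcases he with rfl | rfl | rfl | rfl <;> rcases Sym2.mem_iff.mp hx with rfl | rfl <;> simp

/-- Three distinct edges of a 4-cycle form a path, whose middle edge meets both others. -/
theorem meet_or_meet_middle_of_mem_quadEdges {e f g : Sym2 V}
    (he : e ∈ quadEdges a b c d) (hf : f ∈ quadEdges a b c d) (hg : g ∈ quadEdges a b c d)
    (hef : e ≠ f) (heg : e ≠ g) (hfg : f ≠ g) :
    (∃ x, x ∈ e ∧ x ∈ f) ∨ ((∃ x, x ∈ e ∧ x ∈ g) ∧ ∃ x, x ∈ g ∧ x ∈ f) := by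
  simp only [quadEdges, Finset.mem_insert, Finset.mem_singleton] at he hf hg
  rcases he with rfl | rfl | rfl | rfl <;> rcases hf with rfl | rfl | rfl | rfl <;>
    rcases hg with rfl | rfl | rfl | rfl <;> simp_all [Sym2.mem_iff]

variable {G : SimpleGraph V} {u v w : V}

theorem exists_meeting_edges_of_mem_quadEdges {W : G.Walk u v} {X : G.Walk v w}
    {e f g : Sym2 V} (heW : e ∈ W.edges) (hfX : f ∈ X.edges) (hg : g ∈ (W.append X).edges)
    (he : e ∈ quadEdges a b c d) (hf : f ∈ quadEdges a b c d) (hgq : g ∈ quadEdges a b c d)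
    (hef : e ≠ f) (hge : g ≠ e) (hgf : g ≠ f) :
    ∃ e' ∈ W.edges, ∃ f' ∈ X.edges, e' ∈ quadEdges a b c d ∧ ∃ x, x ∈ e' ∧ x ∈ f' := by
  rcases meet_or_meet_middle_of_mem_quadEdges he hf hgq hef hge.symm hgf.symm with
    hmeet | ⟨hmeet_eg, hmeet_gf⟩
  · exact ⟨e, heW, f, hfX, he, hmeet⟩
  rw [Walk.edges_append, List.mem_append] at hg
  rcases hg with hgW | hgX
  · exact ⟨g, hgW, f, hfX, hgq, hmeet_gf⟩
  · exact ⟨e, heW, g, hgX, he, hmeet_eg⟩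

theorem length_filter_edges_quadEdges_notMem {W : G.Walk u v} {X : G.Walk v w}
    (hL : (W.append X).IsPath) (hv : v ∉ ({a, b, c, d} : Finset V))
    (h3 : ((W.append X).edges.filter (· ∈ quadEdges a b c d)).length = 3) :
    (W.edges.filter (· ∈ quadEdges a b c d)).length ∉ ({1, 2} : Set ℕ) := by
  intro hW
  simp only [Walk.edges_append, List.filter_append, List.length_append] at h3
  simp only [Set.mem_insert_iff, Set.mem_singleton_iff] at hW
  have hWpos : 0 < (W.edges.filter (· ∈ quadEdges a b c d)).length := by omega
  have hXpos : 0 < (X.edges.filter (· ∈ quadEdges a b c d)).length := by omega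
  obtain ⟨e, he⟩ := List.exists_mem_of_length_pos hWpos
  obtain ⟨f, hf⟩ := List.exists_mem_of_length_pos hXpos
  simp only [List.mem_filter, decide_eq_true_eq] at he hf
  have hef : e ≠ f := fun h => (Walk.isTrail_append W X).mp hL.isTrail |>.2.2 he.1 (h ▸ hf.1)
  obtain ⟨g, hg, hge, hgf⟩ :=
    List.exists_mem_ne_ne_of_nodup (hL.edges_nodup.filter (· ∈ quadEdges a b c d))
      (by simp only [Walk.edges_append, List.filter_append, List.length_append]; omega) e f
  simp only [List.mem_filter, decide_eq_true_eq] at hg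
  obtain ⟨e', he'W, f', hf'X, he'q, x, hxe', hxf'⟩ :=
    exists_meeting_edges_of_mem_quadEdges he.1 hf.1 hg.1 he.2 hf.2 hg.2 hef hge hgf
  have hxv : x = v := hL.eq_of_mem_edges_append he'W hf'X hxe' hxf'
  exact hv (hxv ▸ mem_of_mem_of_mem_quadEdges he'q hxe')

end QuadEdges

theorem cnt_append {m n : ℕ} {u v w : Fin (m+1) × Fin (n+1)} (W : (gridGraph m n).Walk u v)
    (X : (gridGraph m n).Walk v w) (i : Fin m) (j : Fin n) :
    cnt (W.append X) i j = cnt W i j + cnt X i j := by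
  simp [cnt, Walk.edges_append, List.filter_append]

theorem learned_predicate_no_false_positives_general {m n : ℕ}
    {vStart vGoal v : Fin (m+1) × Fin (n+1)}
    (k : Fin m → Fin n → Option ℕ)
    (L : (gridGraph m n).Walk vStart vGoal) (hL : L.IsPath)
    (hsol : ∀ i j t, k i j = some t → cnt L i j = t)
    (W : (gridGraph m n).Walk vStart v)
    (hpre : ∃ X : (gridGraph m n).Walk v vGoal, L = W.append X) :
    (∀ i j t, k i j = some t → cnt W i j ≤ t) ∧
    (∀ i j, k i j = some 3 → v ∉ squareCorners i j →
      cnt W i j ∉ ({1, 2} : Set ℕ)) := by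
  obtain ⟨X, rfl⟩ := hpre
  refine ⟨fun i j t hkt => ?_, fun i j hk3 hv => ?_⟩
  · have := hsol i j t hkt
    rw [cnt_append] at this
    omega
  · exact length_filter_edges_quadEdges_notMem hL hv (hsol i j 3 hk3)

/-- Theorem 1: the learned predicate has no false positives. For any prefix `W`
of a solution `L`: (a) for every constrained square, the edge count of `W` is at
most the triangle count; (b) for every square with a three-triangle constraint
whose corners do not include the last vertex of `W`, the edge count of `W` is
neither 1 nor 2. Hence the predicate, which fires exactly when (a) or (b) is
violated, never fires on a prefix of a solution. -/
theorem learned_predicate_no_false_positives {m n : ℕ}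
    {vStart vGoal v : Fin (m+1) × Fin (n+1)}
    (k : Fin m → Fin n → Option ℕ)
    (hk : ∀ i j t, k i j = some t → t = 1 ∨ t = 2 ∨ t = 3)
    (L : (gridGraph m n).Walk vStart vGoal) (hL : L.IsPath)
    (hsol : ∀ i j t, k i j = some t → cnt L i j = t)
    (W : (gridGraph m n).Walk vStart v)
    (hpre : ∃ X : (gridGraph m n).Walk v vGoal, L = W.append X) :
    (∀ i j t, k i j = some t → cnt W i j ≤ t) ∧
    (∀ i j, k i j = some 3 → v ∉ squareCorners i j →
      cnt W i j ∉ ({1, 2} : Set ℕ)) :=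
  learned_predicate_no_false_positives_general k L hL hsol W hpre
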